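/- arXiv:2003.04149 — 2 statements merged into one kernel-verified Lean document; each statement's English description precedes it below -/
import Mathlib

section
/- Let (H, μ) be a commutative Hilbertian Frobenius semigroup. Then (H, μ) is radical (equal to its Jacobson radical) if and only if μ = 0. -/
/-!
The Frobenius condition says that the adjoint of a left multiplication `L_u = μ u` is again a left
multiplication, so the left multiplications form a commuting, `star`-closed set of operators and
generate a commutative C⋆-algebra. If `μ ≠ 0`, some `L_u` is nonzero, and since the Gelfand
transform is isometric some character `φ` of that algebra does not vanish on it. Then
`a ↦ φ (L_a)` is a nonzero bounded functional with `φ (L_{μ(a, b)}) = φ (L_a) φ (L_b)`, and its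
Riesz representative is group-like. Conversely a group-like `x` satisfies
`⟪x, μ(x, x)⟫ = ⟪x, x⟫²`, so there is none when `μ = 0`; and the radical is all of `H` exactly
when there is no group-like element, since a group-like `x` is not orthogonal to itself.
-/

open scoped ComplexInnerProductSpace

/-- `x` is group-like: `x ≠ 0` and `μ†(x) = x ⊗ x`, i.e.
`⟨μ(u ⊗ v), x⟩ = ⟨u, x⟩⟨v, x⟩` for all `u v`. -/
def IsGrouplike {H : Type*} [NormedAddCommGroup H] [InnerProductSpace ℂ H]
    (m : H →L[ℂ] H →L[ℂ] H) (x : H) : Prop :=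
  x ≠ 0 ∧ ∀ u v : H, ⟪x, m u v⟫ = ⟪x, u⟫ * ⟪x, v⟫

theorem WeakDual.CharacterSpace.exists_apply_ne_zero {B : Type*} [CommCStarAlgebra B] {b : B}
    (hb : b ≠ 0) : ∃ φ : WeakDual.characterSpace ℂ B, φ b ≠ 0 := by
  by_contra! h
  exact hb ((gelfandTransform_isometry B).injective (by ext φ; simpa using h φ))

open scoped IsMulCommutative in
theorem StarAlgebra.exists_characterSpace_topologicalClosure_adjoin_apply_ne_zero
    {A : Type*} [CStarAlgebra A] {s : Set A} (hcomm : ∀ a ∈ s, ∀ b ∈ s, a * b = b * a)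
    (hstar : ∀ a ∈ s, star a ∈ s) {x : (adjoin ℂ s).topologicalClosure} (hx : x ≠ 0) :
    ∃ φ : WeakDual.characterSpace ℂ (adjoin ℂ s).topologicalClosure, φ x ≠ 0 := by
  have hS : IsClosed ((adjoin ℂ s).topologicalClosure : Set A) :=
    (adjoin ℂ s).isClosed_topologicalClosure
  have : IsMulCommutative (adjoin ℂ s) :=
    StarAlgebra.isMulCommutative_adjoin ℂ hcomm fun a ha b hb => hcomm a ha _ (hstar b hb)
  let _ : CommRing (adjoin ℂ s).topologicalClosure :=
    (adjoin ℂ s).commRingTopologicalClosure mul_comm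
  let _ : CommCStarAlgebra (adjoin ℂ s).topologicalClosure := { }
  exact WeakDual.CharacterSpace.exists_apply_ne_zero hx

namespace IsGrouplike

variable {H : Type*} [NormedAddCommGroup H] [InnerProductSpace ℂ H] {m : H →L[ℂ] H →L[ℂ] H}

theorem not_zero (x : H) : ¬IsGrouplike 0 x := fun ⟨hx, hmul⟩ => by
  have := hmul x x
  simp_all

theorem setOf_forall_inner_eq_zero_eq_univ_iff :
    {u : H | ∀ x : H, IsGrouplike m x → ⟪x, u⟫ = 0} = Set.univ ↔ ∀ x, ¬IsGrouplike m x := by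
  refine ⟨fun h x hx => hx.1 ?_, fun h => Set.eq_univ_of_forall fun u x hx => (h x hx).elim⟩
  exact inner_self_eq_zero.mp ((Set.eq_univ_iff_forall.mp h x) x hx)

theorem toDual_symm [CompleteSpace H] {f : H →L[ℂ] ℂ} (hf : f ≠ 0)
    (hmul : ∀ a b, f (m a b) = f a * f b) :
    IsGrouplike m ((InnerProductSpace.toDual ℂ H).symm f) := by
  refine ⟨by simpa using hf, fun a b => ?_⟩
  simp only [InnerProductSpace.toDual_symm_apply, hmul]

end IsGrouplike

section Frobenius

variable {H : Type*} [NormedAddCommGroup H] [InnerProductSpace ℂ H] {m : H →L[ℂ] H →L[ℂ] H}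

theorem mul_eq_apply_of_assoc (hassoc : ∀ u v w : H, m (m u v) w = m u (m v w)) (a b : H) :
    m a * m b = m (m a b) :=
  ContinuousLinearMap.ext fun v => (hassoc a b v).symm

theorem star_mem_range_of_frobenius [CompleteSpace H]
    (hfrob : ∀ u : H, ∃ us : H, ∀ v w : H, ⟪m u v, w⟫ = ⟪v, m us w⟫) (a : H) :
    star (m a) ∈ Set.range m := by
  obtain ⟨as, has⟩ := hfrob a
  refine ⟨as, ?_⟩
  rw [ContinuousLinearMap.star_eq_adjoint, (ContinuousLinearMap.eq_adjoint_iff _ _).2 has,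
    ContinuousLinearMap.adjoint_adjoint]

theorem exists_character_of_ne_zero [CompleteSpace H] (hcomm : ∀ u v : H, m u v = m v u)
    (hassoc : ∀ u v w : H, m (m u v) w = m u (m v w))
    (hfrob : ∀ u : H, ∃ us : H, ∀ v w : H, ⟪m u v, w⟫ = ⟪v, m us w⟫) (hm : m ≠ 0) :
    ∃ f : H →L[ℂ] ℂ, f ≠ 0 ∧ ∀ a b, f (m a b) = f a * f b := by
  set S := (StarAlgebra.adjoin ℂ (Set.range m)).topologicalClosure
  have hmem (a : H) : m a ∈ S :=
    (StarAlgebra.adjoin ℂ _).le_topologicalClosure (StarAlgebra.subset_adjoin ℂ _ ⟨a, rfl⟩)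
  let j : H →L[ℂ] S := m.codRestrict S.toSubalgebra.toSubmodule hmem
  obtain ⟨u, hu⟩ : ∃ u, m u ≠ 0 := by
    by_contra! h
    exact hm (ContinuousLinearMap.ext h)
  have hrange_comm : ∀ x ∈ Set.range m, ∀ y ∈ Set.range m, x * y = y * x := by
    rintro _ ⟨a, rfl⟩ _ ⟨b, rfl⟩
    rw [mul_eq_apply_of_assoc hassoc, mul_eq_apply_of_assoc hassoc, hcomm]
  obtain ⟨φ, hφ⟩ := StarAlgebra.exists_characterSpace_topologicalClosure_adjoin_apply_ne_zero
    hrange_comm (by rintro _ ⟨a, rfl⟩; exact star_mem_range_of_frobenius hfrob a)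
    (x := j u) (fun h => hu (congrArg Subtype.val h))
  refine ⟨(WeakDual.toStrongDual (φ : WeakDual ℂ S)).comp j, fun h => hφ ?_, fun a b => ?_⟩
  · simpa using congr($h u)
  · have : j (m a b) = j a * j b := Subtype.ext (mul_eq_apply_of_assoc hassoc a b).symm
    simp [this]

end Frobenius

/-- A commutative Hilbertian Frobenius semigroup (Frobenius via the
equivalent `H*`-adjoint formulation) is radical — its Jacobson radical, the orthogonal
complement of the set of group-like elements, is the whole space — iff `μ = 0`. -/
theorem stmt_13 {H : Type*} [NormedAddCommGroup H] [InnerProductSpace ℂ H] [CompleteSpace H]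
    (m : H →L[ℂ] H →L[ℂ] H)
    (hcomm : ∀ u v : H, m u v = m v u)
    (hassoc : ∀ u v w : H, m (m u v) w = m u (m v w))
    (hfrob : ∀ u : H, ∃ us : H, ∀ v w : H, ⟪m u v, w⟫ = ⟪v, m us w⟫) :
    ({u : H | ∀ x : H, IsGrouplike m x → ⟪x, u⟫ = 0} = Set.univ) ↔ m = 0 := by
  rw [IsGrouplike.setOf_forall_inner_eq_zero_eq_univ_iff]
  refine ⟨fun h => by_contra fun hm => ?_, fun hm => hm ▸ IsGrouplike.not_zero⟩
  obtain ⟨f, hf, hmul⟩ := exists_character_of_ne_zero hcomm hassoc hfrob hm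
  exact h _ (IsGrouplike.toDual_symm hf hmul)
end

section
/- Let (H, μ) be a finite-dimensional commutative Hilbertian Frobenius semigroup. Then (H, μ) has a unit element if and only if μ is surjective, if and only if μ† is injective, if and only if (H, μ) is semisimple. -/
/-!
The Frobenius condition says that the adjoint of each multiplication operator `m u` is again a
multiplication operator `m u*`. Hence a vector is orthogonal to all products iff it annihilates
`H`, and every `m u` is normal. If the annihilator is trivial, then for a basis `(bᵢ)` the element
`t = ∑ bᵢ* bᵢ` satisfies `⟪u, t u⟫ = ∑ ‖bᵢ u‖²`, so `m t` is injective, hence bijective, and the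
preimage of `t` under `m t` is a unit. With a unit, `H` is a finite-dimensional commutative
`ℂ`-algebra, and the Riesz vector of a character is group-like. So a vector orthogonal to all
group-like elements is killed by every character, lies in every prime ideal and is nilpotent;
then `m u` is a nilpotent normal operator, hence zero. Conversely, a group-like `x` is orthogonal
to every annihilating `u`, because `⟪x, x u⟫ = ⟪x, x⟫ ⟪x, u⟫`.
-/

open scoped ComplexInnerProductSpace

theorem isNilpotent_of_forall_algHom_apply_eq_zero {k A : Type*} [Field k] [IsAlgClosed k]
    [CommRing A] [Algebra k A] [Algebra.IsIntegral k A] {u : A}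
    (hu : ∀ χ : A →ₐ[k] k, χ u = 0) : IsNilpotent u := by
  rw [← mem_nilradical, nilradical_eq_sInf, Ideal.mem_sInf]
  intro P hP
  have : P.IsPrime := hP
  let e : k ≃ₐ[k] A ⧸ P :=
    AlgEquiv.ofBijective (Algebra.ofId k _) IsAlgClosed.algebraMap_bijective_of_isIntegral
  have h := hu (e.symm.toAlgHom.comp (Ideal.Quotient.mkₐ k P))
  simpa [Ideal.Quotient.eq_zero_iff_mem] using h

theorem eq_zero_of_sum_inner_self_eq_zero {𝕜 E ι : Type*} [RCLike 𝕜] [NormedAddCommGroup E]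
    [InnerProductSpace 𝕜 E] {s : Finset ι} {x : ι → E} (h : ∑ i ∈ s, inner 𝕜 (x i) (x i) = 0) :
    ∀ i ∈ s, x i = 0 := by
  have hnorm : ∑ i ∈ s, ‖x i‖ ^ 2 = 0 := by
    simpa [map_sum, inner_self_eq_norm_sq] using congrArg RCLike.re h
  intro i hi
  simpa using (Finset.sum_eq_zero_iff_of_nonneg fun j _ => sq_nonneg ‖x j‖).1 hnorm i hi

theorem span_eq_top_iff_forall_inner_eq_zero {𝕜 E : Type*} [RCLike 𝕜] [NormedAddCommGroup E]
    [InnerProductSpace 𝕜 E] [FiniteDimensional 𝕜 E] {S : Set E} :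
    Submodule.span 𝕜 S = ⊤ ↔ ∀ u : E, (∀ s ∈ S, inner 𝕜 u s = 0) → u = 0 := by
  rw [← Submodule.orthogonal_eq_bot_iff, Submodule.eq_bot_iff]
  refine forall_congr' fun u => imp_congr_left ?_
  rw [Submodule.mem_orthogonal']
  exact ⟨fun h s hs => h s (Submodule.subset_span hs),
    fun h s hs => Submodule.span_le (p := LinearMap.ker (innerₛₗ 𝕜 u)) |>.2 h hs⟩

theorem ContinuousLinearMap.IsStarNormal.eq_zero_of_isNilpotent {𝕜 E : Type*} [RCLike 𝕜]
    [NormedAddCommGroup E] [InnerProductSpace 𝕜 E] [CompleteSpace E] {T : E →L[𝕜] E}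
    (hT : IsStarNormal T) (hnil : IsNilpotent T) : T = 0 := by
  have hker : ∀ w, T (T w) = 0 → T w = 0 := fun w hw =>
    inner_self_eq_zero.1 <| (orthogonal_range hT ▸ hw : T w ∈ T.rangeᗮ) (T w) ⟨w, rfl⟩
  obtain ⟨n, hn⟩ := hnil
  have hn' : T ^ (n + 1) = 0 := by rw [pow_succ, hn, zero_mul]
  clear hn
  induction n with
  | zero => simpa using hn'
  | succ n ih =>
    refine ih (ContinuousLinearMap.ext fun w => ?_)
    have := hker _ (by simpa [pow_succ'] using congrArg (· w) hn' : T (T ((T ^ n) w)) = 0)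
    simpa [pow_succ'] using this

section FrobeniusSemigroup

variable {H : Type*} [NormedAddCommGroup H] [InnerProductSpace ℂ H] {m : H →L[ℂ] H →L[ℂ] H}

theorem forall_inner_mul_eq_zero_iff (hassoc : ∀ u v w : H, m (m u v) w = m u (m v w))
    (hfrob : ∀ u : H, ∃ us : H, ∀ v w : H, ⟪m u v, w⟫ = ⟪v, m us w⟫) (u : H) :
    (∀ v w : H, ⟪u, m v w⟫ = 0) ↔ ∀ v : H, m v u = 0 := by
  refine ⟨fun h v => ?_, fun h v w => ?_⟩ <;> obtain ⟨vs, hvs⟩ := hfrob v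
  · rw [← inner_self_eq_zero (𝕜 := ℂ), hvs, ← hassoc, h]
  · rw [← inner_conj_symm, hvs, h, inner_zero_right, map_zero]

theorem IsGrouplike.inner_eq_zero_of_mul_eq_zero {x u : H} (hx : IsGrouplike m x)
    (h : m x u = 0) : ⟪x, u⟫ = 0 := by
  have hxu := hx.2 x u
  rw [h, inner_zero_right, eq_comm, mul_eq_zero] at hxu
  exact hxu.resolve_left (inner_self_ne_zero.2 hx.1)

theorem exists_unit_of_injective_mul [FiniteDimensional ℂ H]
    (hassoc : ∀ u v w : H, m (m u v) w = m u (m v w)) {t : H} (ht : Function.Injective (m t)) :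
    ∃ e : H, ∀ u : H, m e u = u := by
  obtain ⟨e, he⟩ := LinearMap.injective_iff_surjective (f := (m t : H →ₗ[ℂ] H)) |>.1 ht t
  have he' : m t e = t := he
  exact ⟨e, fun u => ht ((hassoc t e u).symm.trans (congrArg (m · u) he'))⟩

theorem exists_unit_of_forall_mul_eq_zero [FiniteDimensional ℂ H]
    (hassoc : ∀ u v w : H, m (m u v) w = m u (m v w))
    (hfrob : ∀ u : H, ∃ us : H, ∀ v w : H, ⟪m u v, w⟫ = ⟪v, m us w⟫)
    (hann : ∀ u : H, (∀ v : H, m v u = 0) → u = 0) :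
    ∃ e : H, ∀ u : H, m e u = u := by
  choose st hst using hfrob
  let b := Module.finBasis ℂ H
  let t := ∑ i, m (st (b i)) (b i)
  have hinner : ∀ u, ⟪u, m t u⟫ = ∑ i, ⟪m (b i) u, m (b i) u⟫ := fun u => by
    simp only [t, map_sum, sum_apply, hassoc, inner_sum, hst]
  refine exists_unit_of_injective_mul hassoc (t := t) <|
    (injective_iff_map_eq_zero (m t)).2 fun u hu => hann u fun v => ?_
  have hbasis := eq_zero_of_sum_inner_self_eq_zero (by rw [← hinner, hu, inner_zero_right])
  have hflip : (m.flip u : H →ₗ[ℂ] H) = 0 := b.ext fun i => hbasis i (Finset.mem_univ i)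
  exact LinearMap.congr_fun hflip v

theorem isGrouplike_toDual_symm [CompleteSpace H] {f : StrongDual ℂ H} (hf : f ≠ 0)
    (hmul : ∀ a b : H, f (m a b) = f a * f b) :
    IsGrouplike m ((InnerProductSpace.toDual ℂ H).symm f) := by
  refine ⟨by simpa using hf, fun a b => ?_⟩
  simp only [InnerProductSpace.toDual_symm_apply, hmul]

theorem isStarNormal_mul [CompleteSpace H] (hcomm : ∀ u v : H, m u v = m v u)
    (hassoc : ∀ u v w : H, m (m u v) w = m u (m v w))
    (hfrob : ∀ u : H, ∃ us : H, ∀ v w : H, ⟪m u v, w⟫ = ⟪v, m us w⟫) (u : H) :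
    IsStarNormal (m u) := by
  obtain ⟨us, hus⟩ := hfrob u
  have hstar : star (m u) = m us := by
    rw [ContinuousLinearMap.star_eq_adjoint, (ContinuousLinearMap.eq_adjoint_iff _ _).2 hus,
      ContinuousLinearMap.adjoint_adjoint]
  refine ⟨ContinuousLinearMap.ext fun v => ?_⟩
  change star (m u) (m u v) = m u (star (m u) v)
  rw [hstar, ← hassoc, hcomm us u, hassoc]

theorem isNilpotent_mul_of_forall_isGrouplike_inner_eq_zero [FiniteDimensional ℂ H]
    (hcomm : ∀ u v : H, m u v = m v u) (hassoc : ∀ u v w : H, m (m u v) w = m u (m v w))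
    {e : H} (he : ∀ u : H, m e u = u) {u : H} (hu : ∀ x : H, IsGrouplike m x → ⟪x, u⟫ = 0) :
    IsNilpotent (m u) := by
  let _ : CommRing H :=
    { (inferInstance : AddCommGroup H) with
      mul := fun a b => m a b
      left_distrib := fun a => map_add (m a)
      right_distrib := fun a b c => by
        change m (a + b) c = m a c + m b c
        rw [map_add]; rfl
      zero_mul := fun a => by
        change m 0 a = 0
        rw [map_zero]; rfl
      mul_zero := fun a => map_zero (m a)
      mul_assoc := hassoc
      one := e
      one_mul := he
      mul_one := fun a => (hcomm a e).trans (he a)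
      mul_comm := hcomm }
  let _ : Algebra ℂ H := Algebra.ofModule
    (fun c a b => by
      change m (c • a) b = c • m a b
      rw [map_smul]; rfl)
    (fun c a => map_smul (m a) c)
  let L : H →+* (H →L[ℂ] H) :=
    { toFun := m
      map_one' := ContinuousLinearMap.ext he
      map_mul' := fun a b => ContinuousLinearMap.ext (hassoc a b)
      map_zero' := map_zero m
      map_add' := map_add m }
  have hchar : ∀ χ : H →ₐ[ℂ] ℂ, χ u = 0 := fun χ => by
    have hχ : χ.toLinearMap.toContinuousLinearMap ≠ 0 := fun h => by
      simpa using congrArg (· 1) h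
    have hx := hu _ (isGrouplike_toDual_symm hχ (map_mul χ))
    rwa [InnerProductSpace.toDual_symm_apply] at hx
  exact (isNilpotent_of_forall_algHom_apply_eq_zero hchar).map L

theorem eq_zero_of_forall_isGrouplike_inner_eq_zero [FiniteDimensional ℂ H]
    (hcomm : ∀ u v : H, m u v = m v u) (hassoc : ∀ u v w : H, m (m u v) w = m u (m v w))
    (hfrob : ∀ u : H, ∃ us : H, ∀ v w : H, ⟪m u v, w⟫ = ⟪v, m us w⟫)
    {e : H} (he : ∀ u : H, m e u = u) {u : H} (hu : ∀ x : H, IsGrouplike m x → ⟪x, u⟫ = 0) :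
    u = 0 := by
  have hmul : m u = 0 := ContinuousLinearMap.IsStarNormal.eq_zero_of_isNilpotent
    (isStarNormal_mul hcomm hassoc hfrob u)
    (isNilpotent_mul_of_forall_isGrouplike_inner_eq_zero hcomm hassoc he hu)
  rw [← he u, hcomm, hmul, zero_apply]

end FrobeniusSemigroup

/-- The four conditions are: a unit exists; `μ` is surjective; `μ†` is injective; the Jacobson
radical, which for Frobenius semigroups is the orthogonal complement of the group-like elements,
is trivial. -/
theorem stmt_14 {H : Type*} [NormedAddCommGroup H] [InnerProductSpace ℂ H]
    [FiniteDimensional ℂ H]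
    (m : H →L[ℂ] H →L[ℂ] H)
    (hcomm : ∀ u v : H, m u v = m v u)
    (hassoc : ∀ u v w : H, m (m u v) w = m u (m v w))
    (hfrob : ∀ u : H, ∃ us : H, ∀ v w : H, ⟪m u v, w⟫ = ⟪v, m us w⟫) :
    ((∃ e : H, ∀ u : H, m e u = u) ↔
      Submodule.span ℂ (Set.range fun p : H × H => m p.1 p.2) = ⊤) ∧
    ((Submodule.span ℂ (Set.range fun p : H × H => m p.1 p.2) = ⊤) ↔
      ∀ u : H, (∀ v w : H, ⟪u, m v w⟫ = 0) → u = 0) ∧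
    ((∀ u : H, (∀ v w : H, ⟪u, m v w⟫ = 0) → u = 0) ↔
      ∀ u : H, (∀ x : H, IsGrouplike m x → ⟪x, u⟫ = 0) → u = 0) := by
  have hann := forall_inner_mul_eq_zero_iff hassoc hfrob
  have hspan : Submodule.span ℂ (Set.range fun p : H × H => m p.1 p.2) = ⊤ ↔
      ∀ u : H, (∀ v w : H, ⟪u, m v w⟫ = 0) → u = 0 := by
    simp only [span_eq_top_iff_forall_inner_eq_zero, Set.forall_mem_range, Prod.forall]
  have hunit : (∀ u : H, (∀ v w : H, ⟪u, m v w⟫ = 0) → u = 0) → ∃ e : H, ∀ u : H, m e u = u :=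
    fun h => exists_unit_of_forall_mul_eq_zero hassoc hfrob fun u hu => h u ((hann u).2 hu)
  refine ⟨⟨fun ⟨e, he⟩ => ?_, hunit ∘ hspan.1⟩, hspan, fun h => ?_, fun h u hu => ?_⟩
  · exact Submodule.eq_top_iff'.2 fun u => Submodule.subset_span ⟨(e, u), he u⟩
  · obtain ⟨e, he⟩ := hunit h
    exact fun u => eq_zero_of_forall_isGrouplike_inner_eq_zero hcomm hassoc hfrob he
  · exact h u fun x hx => hx.inner_eq_zero_of_mul_eq_zero ((hann u).1 hu x)
end
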